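/- (Iterated expansion estimate.) Let Ω be a set, T : Ω → Ω a bijection, A : Ω → SL(2l, ℂ), and suppose there exist ε > 0 and R ∈ ℕ such that for every ω ∈ Ω and every unit vector v ∈ ℂ^{2l} there is r ∈ ℤ with |r| ≤ R, r ≠ 0, and ‖A_r(ω)v‖ ≥ 1 + ε. Then, constructing recursively r_k, v_k, ω_k by choosing at each step such an r, normalizing v, and moving to T^{r}ω, one obtains, with R_k := r₁ + ⋯ + r_k: for every k ∈ ℕ, ‖A_{R_k}(ω)v‖ ≥ (1 + ε)^k. -/

import Mathlib

/-!
The transfer matrices form a cocycle, `A_{s+r}(ω) = A_r(Tˢω) A_s(ω)`, and they are invertible,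
so `A_s(ω)v ≠ 0`. Applying the hypothesis at `Tˢω` to the normalized vector `A_s(ω)v / ‖A_s(ω)v‖`
gives a step `r` with `‖A_{s+r}(ω)v‖ ≥ (1 + ε)‖A_s(ω)v‖`; iterating from `s = 0` yields
geometric growth.
-/

noncomputable section
open Matrix

variable {Ω : Type*} {ι : Type*} [Fintype ι] [DecidableEq ι]

/-- Forward transfer matrices: `fwd T A n ω = A(Tⁿ⁻¹ω) ⋯ A(ω)`. -/
def fwd (T : Equiv.Perm Ω) (A : Ω → Matrix ι ι ℂ) : ℕ → Ω → Matrix ι ι ℂ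
  | 0, _ => 1
  | n + 1, ω => A ((⇑T)^[n] ω) * fwd T A n ω

/-- Backward transfer matrices: `bwd T A n ω = A(T⁻ⁿω)⁻¹ ⋯ A(T⁻¹ω)⁻¹`. -/
def bwd (T : Equiv.Perm Ω) (A : Ω → Matrix ι ι ℂ) : ℕ → Ω → Matrix ι ι ℂ
  | 0, _ => 1
  | n + 1, ω => (A ((⇑T.symm)^[n + 1] ω))⁻¹ * bwd T A n ω

/-- The transfer matrices `Aₙ(ω)`, `n : ℤ`, of the cocycle `(T, A)`. -/
def transfer (T : Equiv.Perm Ω) (A : Ω → Matrix ι ι ℂ) (n : ℤ) (ω : Ω) : Matrix ι ι ℂ :=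
  if 0 ≤ n then fwd T A n.toNat ω else bwd T A (-n).toNat ω

section Cocycle

variable (T : Equiv.Perm Ω) (A : Ω → Matrix ι ι ℂ)

lemma transfer_zero (ω : Ω) : transfer T A 0 ω = 1 := by
  rw [transfer, if_pos le_rfl]; rfl

lemma transfer_natCast (n : ℕ) (ω : Ω) : transfer T A n ω = fwd T A n ω := by
  rw [transfer, if_pos n.cast_nonneg, Int.toNat_natCast]

lemma transfer_neg_natCast (n : ℕ) (ω : Ω) : transfer T A (-n) ω = bwd T A n ω := by
  rcases n with _ | n
  · simp only [Nat.cast_zero, neg_zero, transfer_zero]; rfl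
  · rw [transfer, if_neg (by omega), neg_neg, Int.toNat_natCast]

lemma transfer_succ (hA : ∀ ω, IsUnit (A ω).det) (n : ℤ) (ω : Ω) :
    transfer T A (n + 1) ω = A ((T ^ n) ω) * transfer T A n ω := by
  obtain ⟨n, rfl | rfl⟩ := Int.eq_nat_or_neg n
  · rw [← Nat.cast_succ, transfer_natCast, transfer_natCast, zpow_natCast,
      ← Equiv.Perm.iterate_eq_pow]
    rfl
  · rcases n with _ | n
    · simp only [Nat.cast_zero, neg_zero, zero_add, zpow_zero, transfer_zero, mul_one]
      rw [← Nat.cast_one, transfer_natCast, Equiv.Perm.one_apply]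
      exact mul_one _
    · have hT : (T ^ (-((n + 1 : ℕ) : ℤ))) ω = (⇑T.symm)^[n + 1] ω := by
        rw [_root_.zpow_neg, zpow_natCast, ← inv_pow, Equiv.Perm.iterate_eq_pow]; rfl
      rw [show -((n + 1 : ℕ) : ℤ) + 1 = -(n : ℤ) by push_cast; ring, transfer_neg_natCast,
        transfer_neg_natCast, hT, bwd, ← mul_assoc, mul_nonsing_inv _ (hA _), one_mul]

lemma transfer_pred (hA : ∀ ω, IsUnit (A ω).det) (n : ℤ) (ω : Ω) :
    transfer T A (n - 1) ω = (A ((T ^ (n - 1)) ω))⁻¹ * transfer T A n ω := by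
  rw [← sub_add_cancel n 1, transfer_succ T A hA (n - 1), add_sub_cancel_right, ← mul_assoc,
    nonsing_inv_mul _ (hA _), one_mul]

theorem transfer_add (hA : ∀ ω, IsUnit (A ω).det) (m n : ℤ) (ω : Ω) :
    transfer T A (m + n) ω = transfer T A m ((T ^ n) ω) * transfer T A n ω := by
  induction m using Int.induction_on with
  | zero => rw [zero_add, transfer_zero, one_mul]
  | succ m ih =>
    rw [add_right_comm, transfer_succ T A hA, ih, transfer_succ T A hA, mul_assoc,
      ← Equiv.Perm.mul_apply, ← _root_.zpow_add]
  | pred m ih =>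
    rw [sub_add_eq_add_sub, transfer_pred T A hA, ih, transfer_pred T A hA, mul_assoc,
      ← Equiv.Perm.mul_apply, ← _root_.zpow_add, sub_add_eq_add_sub]

lemma transfer_mulVec_ne_zero (hA : ∀ ω, IsUnit (A ω).det) (n : ℤ) (ω : Ω) {v : ι → ℂ}
    (hv : v ≠ 0) : transfer T A n ω *ᵥ v ≠ 0 := by
  intro h0
  have h := congrArg (transfer T A (-n) ((T ^ n) ω) *ᵥ ·) h0
  simp only [mulVec_mulVec, ← transfer_add T A hA, neg_add_cancel, transfer_zero, one_mulVec,
    mulVec_zero] at h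
  exact hv h

end Cocycle

lemma mul_norm_le_norm_mulVec {m n : Type*} [Fintype m] [Fintype n] {M : Matrix m n ℂ}
    {w : n → ℂ} {c : ℝ} (h : c ≤ ‖M *ᵥ (‖w‖⁻¹ • w)‖) : c * ‖w‖ ≤ ‖M *ᵥ w‖ := by
  rcases eq_or_ne w 0 with rfl | hw
  · simp
  have hw' : 0 < ‖w‖ := norm_pos_iff.mpr hw
  rw [mulVec_smul, norm_smul, norm_inv, norm_norm] at h
  rwa [← le_div_iff₀ hw', div_eq_inv_mul]

theorem exists_seq_geometric_growth {g : ℤ → ℝ} {c : ℝ} (hc : 0 ≤ c) {S : Set ℤ}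
    (hstep : ∀ s, ∃ r ∈ S, c * g s ≤ g (s + r)) :
    ∃ x : ℕ → ℤ, x 0 = 0 ∧ (∀ k, x (k + 1) - x k ∈ S) ∧ ∀ k, c ^ k * g 0 ≤ g (x k) := by
  choose step hstepS hstep using hstep
  set x : ℕ → ℤ := fun k => (fun s => s + step s)^[k] 0
  have hsucc (k : ℕ) : x (k + 1) = x k + step (x k) := Function.iterate_succ_apply' _ k 0
  refine ⟨x, rfl, fun k => ?_, fun k => ?_⟩
  · simpa only [hsucc, add_sub_cancel_left] using hstepS _
  · induction k with
    | zero => exact (one_mul _).le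
    | succ k ih =>
      rw [hsucc, pow_succ', mul_assoc]
      exact (mul_le_mul_of_nonneg_left ih hc).trans (hstep _)

theorem exists_expanding_step (T : Equiv.Perm Ω) (A : Ω → Matrix ι ι ℂ)
    (hA : ∀ ω, IsUnit (A ω).det) {c : ℝ} {R : ℕ}
    (h : ∀ (ω : Ω) (v : ι → ℂ), ‖v‖ = 1 →
      ∃ r : ℤ, r ≠ 0 ∧ |r| ≤ (R : ℤ) ∧ c ≤ ‖transfer T A r ω *ᵥ v‖)
    (ω : Ω) {v : ι → ℂ} (hv : v ≠ 0) (s : ℤ) :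
    ∃ r ∈ {r : ℤ | r ≠ 0 ∧ |r| ≤ (R : ℤ)},
      c * ‖transfer T A s ω *ᵥ v‖ ≤ ‖transfer T A (s + r) ω *ᵥ v‖ := by
  set w := transfer T A s ω *ᵥ v
  obtain ⟨r, hr0, hrR, hc⟩ :=
    h ((T ^ s) ω) (‖w‖⁻¹ • w) (norm_smul_inv_norm (transfer_mulVec_ne_zero T A hA s ω hv))
  refine ⟨r, ⟨hr0, hrR⟩, ?_⟩
  rw [add_comm, transfer_add T A hA, ← mulVec_mulVec]
  exact mul_norm_le_norm_mulVec hc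

/-- iterated expansion estimate: if every `(ω, v)` with `‖v‖ = 1` admits a
nonzero `r` with `|r| ≤ R` and `‖A_r(ω)v‖ ≥ 1 + ε`, then along a recursively constructed
sequence of times `R_k` (with nonzero steps of size at most `R`) one has
`‖A_{R_k}(ω)v‖ ≥ (1 + ε)^k`. -/
theorem stmt3 {l : ℕ} (T : Equiv.Perm Ω) (A : Ω → Matrix (Fin (2 * l)) (Fin (2 * l)) ℂ)
    (hSL : ∀ ω, (A ω).det = 1) (ε : ℝ) (hε : 0 < ε) (R : ℕ)
    (h : ∀ (ω : Ω) (v : Fin (2 * l) → ℂ), ‖v‖ = 1 →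
      ∃ r : ℤ, r ≠ 0 ∧ |r| ≤ (R : ℤ) ∧ 1 + ε ≤ ‖(transfer T A r ω).mulVec v‖) :
    ∀ (ω : Ω) (v : Fin (2 * l) → ℂ), ‖v‖ = 1 →
      ∃ Rseq : ℕ → ℤ, Rseq 0 = 0 ∧
        (∀ k : ℕ, Rseq (k + 1) - Rseq k ≠ 0 ∧ |Rseq (k + 1) - Rseq k| ≤ (R : ℤ)) ∧
        ∀ k : ℕ, (1 + ε) ^ k ≤ ‖(transfer T A (Rseq k) ω).mulVec v‖ := by
  intro ω v hv
  have hA : ∀ ω, IsUnit (A ω).det := fun ω => (hSL ω).symm ▸ isUnit_one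
  have hv0 : v ≠ 0 := norm_ne_zero_iff.mp (hv.symm ▸ one_ne_zero)
  obtain ⟨x, hx0, hxS, hxgrowth⟩ := exists_seq_geometric_growth (by linarith)
    (exists_expanding_step T A hA h ω hv0)
  refine ⟨x, hx0, hxS, fun k => ?_⟩
  simpa only [transfer_zero, one_mulVec, hv, mul_one] using hxgrowth k
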